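/- arXiv:1507.02782 — 2 statements merged into one kernel-verified Lean document; each statement's English description precedes it below -/
import Mathlib

section
/- Let H be a closed subgroup of GL(n,ℝ), let U ⊆ ℝⁿ be open and Hᵀ-invariant, and let C ⊆ U be a topological section for U. Then for every relatively compact open neighborhood V ⊆ H of the identity, the set VᵀC := {hᵀc : h ∈ V, c ∈ C} ⊆ U is a topological quasi-section for U. -/
open Matrix Set Topology
open scoped MatrixGroups

noncomputable section

variable {n : ℕ}

/-- The transpose action of an element of `GL(n,ℝ)` on `ℝⁿ`: `(h, ξ) ↦ hᵀ ξ`. -/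
def tAct (h : GL (Fin n) ℝ) (v : Fin n → ℝ) : Fin n → ℝ :=
  ((h : Matrix (Fin n) (Fin n) ℝ)ᵀ) *ᵥ v

/-- A set `U ⊆ ℝⁿ` is `Hᵀ`-invariant. -/
def TInvariant (H : Subgroup (GL (Fin n) ℝ)) (U : Set (Fin n → ℝ)) : Prop :=
  ∀ h ∈ H, ∀ v ∈ U, tAct h v ∈ U

/-- `HᵀC = {hᵀ c : h ∈ H, c ∈ C}`. -/
def tOrb (H : Subgroup (GL (Fin n) ℝ)) (C : Set (Fin n → ℝ)) : Set (Fin n → ℝ) :=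
  {v | ∃ h ∈ H, ∃ c ∈ C, tAct h c = v}

/-- `((Y,Z)) = {h ∈ H : hᵀY ∩ Z ≠ ∅}`, as a set of elements of `GL(n,ℝ)`. -/
def meetSet (H : Subgroup (GL (Fin n) ℝ)) (Y Z : Set (Fin n → ℝ)) :
    Set (GL (Fin n) ℝ) :=
  {h | h ∈ H ∧ ∃ y ∈ Y, tAct h y ∈ Z}

/-- `C` is a topological quasi-section for `U`: `C` is open, `HᵀC = U`, and `((C,C))`
is relatively compact. -/
def IsQuasiSection (H : Subgroup (GL (Fin n) ℝ)) (U C : Set (Fin n → ℝ)) : Prop :=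
  IsOpen C ∧ C ⊆ U ∧ tOrb H C = U ∧ IsCompact (closure (meetSet H C C))

/-- `C` is a topological section for `U`: the map `H × C → U, (h,c) ↦ hᵀc` is a
homeomorphism. -/
def IsTopSection (H : Subgroup (GL (Fin n) ℝ)) (U C : Set (Fin n → ℝ)) : Prop :=
  C ⊆ U ∧ ∃ e : (↥H × ↥C) ≃ₜ ↥U,
    ∀ (h : ↥H) (c : ↥C), ((e (h, c) : ↥U) : Fin n → ℝ) = tAct (h : GL (Fin n) ℝ) (c : Fin n → ℝ)

open scoped Pointwise

/-! Since `(h, c) ↦ hᵀc` is injective on `H × C`, an equation `hᵀ(v₁ᵀc₁) = v₂ᵀc₂` with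
`vᵢ ∈ V`, `cᵢ ∈ C` forces `v₁h = v₂`; hence `((VᵀC, VᵀC)) ⊆ V⁻¹V`, which has compact closure.
`VᵀC` is open as the image of the open set `V × C` under the homeomorphism `H × C ≃ U`. -/

/-- `tOrb H C` is `tImage H C` by definition. -/
def tImage (V : Set (GL (Fin n) ℝ)) (C : Set (Fin n → ℝ)) : Set (Fin n → ℝ) :=
  {v | ∃ h ∈ V, ∃ c ∈ C, tAct h c = v}

theorem tAct_mul (f g : GL (Fin n) ℝ) (v : Fin n → ℝ) :
    tAct (f * g) v = tAct g (tAct f v) := by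
  simp [tAct, Matrix.transpose_mul, Matrix.mulVec_mulVec]

theorem tAct_one (v : Fin n → ℝ) : tAct (1 : GL (Fin n) ℝ) v = v := by
  simp [tAct]

theorem subset_tImage {V : Set (GL (Fin n) ℝ)} (hV1 : (1 : GL (Fin n) ℝ) ∈ V)
    (C : Set (Fin n → ℝ)) : C ⊆ tImage V C :=
  fun c hc => ⟨1, hV1, c, hc, tAct_one c⟩

theorem tImage_subset_of_tInvariant {H : Subgroup (GL (Fin n) ℝ)} {U C : Set (Fin n → ℝ)}
    {V : Set (GL (Fin n) ℝ)} (hVH : V ⊆ H) (hU : TInvariant H U) (hCU : C ⊆ U) :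
    tImage V C ⊆ U := by
  rintro _ ⟨h, hV, c, hc, rfl⟩
  exact hU h (hVH hV) c (hCU hc)

theorem tOrb_tImage_subset {H : Subgroup (GL (Fin n) ℝ)} {V : Set (GL (Fin n) ℝ)}
    {C : Set (Fin n → ℝ)} (hVH : V ⊆ H) : tOrb H (tImage V C) ⊆ tOrb H C := by
  rintro _ ⟨g, hg, _, ⟨h, hV, c, hc, rfl⟩, rfl⟩
  exact ⟨h * g, mul_mem (hVH hV) hg, c, hc, tAct_mul h g c⟩

namespace IsTopSection

variable {H : Subgroup (GL (Fin n) ℝ)} {U C : Set (Fin n → ℝ)}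

theorem tOrb_eq (hC : IsTopSection H U C) (hU : TInvariant H U) : tOrb H C = U := by
  obtain ⟨hCU, e, he⟩ := hC
  refine (tImage_subset_of_tInvariant le_rfl hU hCU).antisymm fun u hu => ?_
  obtain ⟨⟨h, c⟩, hhc⟩ := e.surjective ⟨u, hu⟩
  exact ⟨h, h.2, c, c.2, by rw [← he, hhc]⟩

theorem eq_of_tAct_eq (hC : IsTopSection H U C) {g g' : GL (Fin n) ℝ} (hg : g ∈ H)
    (hg' : g' ∈ H) {c c' : Fin n → ℝ} (hc : c ∈ C) (hc' : c' ∈ C)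
    (heq : tAct g c = tAct g' c') : g = g' := by
  obtain ⟨-, e, he⟩ := hC
  have : e (⟨g, hg⟩, ⟨c, hc⟩) = e (⟨g', hg'⟩, ⟨c', hc'⟩) := Subtype.ext (by rw [he, he, heq])
  exact congrArg (fun p => (p.1 : GL (Fin n) ℝ)) (e.injective this)

theorem isOpen_tImage (hC : IsTopSection H U C) (hU : IsOpen U) {W : Set (GL (Fin n) ℝ)}
    (hWH : W ⊆ H) (hW : IsOpen ((fun h : ↥H => (h : GL (Fin n) ℝ)) ⁻¹' W)) :
    IsOpen (tImage W C) := by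
  obtain ⟨-, e, he⟩ := hC
  have himage : tImage W C = Subtype.val '' (e '' ((Subtype.val ⁻¹' W) ×ˢ univ)) := by
    ext v
    constructor
    · rintro ⟨h, hW, c, hc, rfl⟩
      exact ⟨_, ⟨(⟨h, hWH hW⟩, ⟨c, hc⟩), ⟨hW, trivial⟩, rfl⟩, he _ _⟩
    · rintro ⟨_, ⟨⟨h, c⟩, ⟨hW, -⟩, rfl⟩, rfl⟩
      exact ⟨h, hW, c, c.2, (he h c).symm⟩
  rw [himage]
  exact hU.isOpenMap_subtype_val _ (e.isOpenMap _ (hW.prod isOpen_univ))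

theorem tOrb_tImage_eq (hC : IsTopSection H U C) (hU : TInvariant H U)
    {V : Set (GL (Fin n) ℝ)} (hVH : V ⊆ H) (hV1 : (1 : GL (Fin n) ℝ) ∈ V) :
    tOrb H (tImage V C) = U := by
  refine ((tOrb_tImage_subset hVH).trans (hC.tOrb_eq hU).le).antisymm ?_
  rw [← hC.tOrb_eq hU]
  rintro _ ⟨g, hg, c, hc, rfl⟩
  exact ⟨g, hg, c, subset_tImage hV1 C hc, rfl⟩

theorem meetSet_tImage_subset (hC : IsTopSection H U C) {V : Set (GL (Fin n) ℝ)}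
    (hVH : V ⊆ H) : meetSet H (tImage V C) (tImage V C) ⊆ V⁻¹ * V := by
  rintro h ⟨hH, _, ⟨v₁, hv₁, c₁, hc₁, rfl⟩, v₂, hv₂, c₂, hc₂, heq⟩
  have hv : v₁ * h = v₂ :=
    hC.eq_of_tAct_eq (mul_mem (hVH hv₁) hH) (hVH hv₂) hc₁ hc₂ (by rw [tAct_mul, heq])
  exact ⟨v₁⁻¹, inv_mem_inv.mpr hv₁, v₂, hv₂, by rw [← hv]; exact inv_mul_cancel_left v₁ h⟩

end IsTopSection

theorem quasiSection_of_topSection_general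
    (H : Subgroup (GL (Fin n) ℝ))
    (U : Set (Fin n → ℝ)) (hUopen : IsOpen U) (hUinv : TInvariant H U)
    (C : Set (Fin n → ℝ)) (hC : IsTopSection H U C)
    (V : Set (GL (Fin n) ℝ)) (hVH : V ⊆ (H : Set (GL (Fin n) ℝ)))
    (hVopen : IsOpen ((fun h : ↥H => (h : GL (Fin n) ℝ)) ⁻¹' V))
    (hV1 : (1 : GL (Fin n) ℝ) ∈ V)
    (hVcpt : IsCompact (closure V)) :
    IsQuasiSection H U {v | ∃ h ∈ V, ∃ c ∈ C, tAct h c = v} := by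
  have hVC : tImage V C ⊆ U := tImage_subset_of_tInvariant hVH hUinv hC.1
  have hmeet : meetSet H (tImage V C) (tImage V C) ⊆ (closure V)⁻¹ * closure V :=
    (hC.meetSet_tImage_subset hVH).trans
      (mul_subset_mul (inv_subset_inv.mpr subset_closure) subset_closure)
  exact ⟨hC.isOpen_tImage hUopen hVH hVopen, hVC, hC.tOrb_tImage_eq hUinv hVH hV1,
    (hVcpt.inv.mul hVcpt).closure_of_subset hmeet⟩

/-- If `C` is a topological section for an open `Hᵀ`-invariant set `U`,
and `V ⊆ H` is a relatively compact open neighborhood of the identity in `H`, then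
`VᵀC` is a topological quasi-section for `U`. -/
theorem quasiSection_of_topSection
    (H : Subgroup (GL (Fin n) ℝ)) (hH : IsClosed (H : Set (GL (Fin n) ℝ)))
    (U : Set (Fin n → ℝ)) (hUopen : IsOpen U) (hUinv : TInvariant H U)
    (C : Set (Fin n → ℝ)) (hC : IsTopSection H U C)
    (V : Set (GL (Fin n) ℝ)) (hVH : V ⊆ (H : Set (GL (Fin n) ℝ)))
    (hVopen : IsOpen ((fun h : ↥H => (h : GL (Fin n) ℝ)) ⁻¹' V))
    (hV1 : (1 : GL (Fin n) ℝ) ∈ V)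
    (hVcpt : IsCompact (closure V)) :
    IsQuasiSection H U {v | ∃ h ∈ V, ∃ c ∈ C, tAct h c = v} :=
  quasiSection_of_topSection_general H U hUopen hUinv C hC V hVH hVopen hV1 hVcpt
end
end

section
/- Let A, X ∈ M₃(ℝ) be commuting lower triangular matrices, with all diagonal entries of A equal to 1 and X strictly lower triangular, and let the group H = {exp(sA + tX) : s,t ∈ ℝ} act on ℝ³ by matrix multiplication. Define Ω₂ = {v ∈ ℝ³ : (Xv)₂ ≠ 0} and Ω₃ = {v ∈ ℝ³ : (Xv)₂ = 0 and (Xv)₃ ≠ 0}. Then Ω₂ and Ω₃ are H-invariant, and for b ∈ {2,3}, whenever Ω_b is nonempty, the set Σ_b = {v ∈ Ω_b : v_b = 0 and |(Xv)_b| = 1} is a topological section for the H-action on Ω_b. -/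
open Matrix Set Topology

noncomputable section

/-- The element `exp(sA + tX)` of the group `H = {exp(sA+tX) : s,t ∈ ℝ}`. -/
def hEl (A X : Matrix (Fin 3) (Fin 3) ℝ) (p : ℝ × ℝ) : Matrix (Fin 3) (Fin 3) ℝ :=
  NormedSpace.exp (p.1 • A + p.2 • X)

/-- `Ω₂ = {v ∈ ℝ³ : (Xv)₂ ≠ 0}`. -/
def Om2 (X : Matrix (Fin 3) (Fin 3) ℝ) : Set (Fin 3 → ℝ) := {v | (X *ᵥ v) 1 ≠ 0}

/-- `Ω₃ = {v ∈ ℝ³ : (Xv)₂ = 0 and (Xv)₃ ≠ 0}`. -/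
def Om3 (X : Matrix (Fin 3) (Fin 3) ℝ) : Set (Fin 3 → ℝ) :=
  {v | (X *ᵥ v) 1 = 0 ∧ (X *ᵥ v) 2 ≠ 0}

/-- `Σ₂ = {v ∈ Ω₂ : v₂ = 0 and |(Xv)₂| = 1}`. -/
def Sig2 (X : Matrix (Fin 3) (Fin 3) ℝ) : Set (Fin 3 → ℝ) :=
  {v | v ∈ Om2 X ∧ v 1 = 0 ∧ |(X *ᵥ v) 1| = 1}

/-- `Σ₃ = {v ∈ Ω₃ : v₃ = 0 and |(Xv)₃| = 1}`. -/
def Sig3 (X : Matrix (Fin 3) (Fin 3) ℝ) : Set (Fin 3 → ℝ) :=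
  {v | v ∈ Om3 X ∧ v 2 = 0 ∧ |(X *ᵥ v) 2| = 1}

/-! Every `exp(sA + tX)` is `e^s` times a unipotent lower triangular matrix commuting with `X`.
On the layer `Ω_b`, where the coordinates of `Xv` before `b` vanish, the functional
`ℓ_b v = (Xv)_b` is therefore scaled by `e^s`, while `exp(tX)` translates `v_b` by `t ℓ_b v`.
So `s = log |ℓ_b v|`, and then `t = v_b / ℓ_b v` read off after undoing `s`, are equivariant
coordinates `σ : Ω_b → ℝ²`; the zero set of any continuous equivariant `σ` is a topological
section, the inverse of the action map being `w ↦ (σ w, -σ w +ᵥ w)`. -/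

namespace Matrix

def IsStrictLowerTriangular {m R : Type*} [Preorder m] [Zero R] (M : Matrix m m R) : Prop :=
  ∀ i j, i ≤ j → M i j = 0

variable {m R : Type*}

theorem IsStrictLowerTriangular.mulVec_apply_eq_zero [LinearOrder m] [Fintype m]
    [NonUnitalNonAssocSemiring R] {M : Matrix m m R} (hM : M.IsStrictLowerTriangular)
    {u : m → R} {i : m} (hu : ∀ j < i, u j = 0) : (M *ᵥ u) i = 0 :=
  Finset.sum_eq_zero fun j _ => by
    rcases lt_or_ge j i with hj | hj
    · simp [hu j hj]
    · simp [hM i j hj]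

theorem IsStrictLowerTriangular.pow_apply_eq_zero [Semiring R] {n : ℕ}
    {M : Matrix (Fin n) (Fin n) R} (hM : M.IsStrictLowerTriangular) :
    ∀ (k : ℕ) (i j : Fin n), (i : ℕ) < j + k → (M ^ k) i j = 0
  | 0, i, j, hij => by simpa using one_apply_ne (Fin.ne_of_lt (by simpa using hij))
  | k + 1, i, j, hij => by
    rw [pow_succ, mul_apply]
    refine Finset.sum_eq_zero fun l _ => ?_
    rcases lt_or_ge (i : ℕ) (l + k) with hl | hl
    · rw [hM.pow_apply_eq_zero k i l hl, zero_mul]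
    · rw [hM l j (by rw [Fin.le_def]; omega), mul_zero]

theorem IsStrictLowerTriangular.pow_eq_zero [Semiring R] {n : ℕ}
    {M : Matrix (Fin n) (Fin n) R} (hM : M.IsStrictLowerTriangular) : M ^ n = 0 := by
  ext i j
  exact hM.pow_apply_eq_zero n i j (by omega)

end Matrix

open NormedSpace in
theorem NormedSpace.exp_eq_sum_range_of_pow_eq_zero {𝔸 : Type*} [Ring 𝔸] [Algebra ℚ 𝔸]
    [TopologicalSpace 𝔸] [IsTopologicalRing 𝔸] [T2Space 𝔸] {x : 𝔸} {k : ℕ} (hx : x ^ k = 0) :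
    exp x = ∑ i ∈ Finset.range k, (i.factorial⁻¹ : ℚ) • x ^ i := by
  rw [exp_eq_tsum_rat]
  exact tsum_eq_sum fun i hi => by
    rw [pow_eq_zero_of_le (by simpa using hi) hx, smul_zero]

namespace Matrix

theorem IsStrictLowerTriangular.exp_apply_of_le [Ring R] [Algebra ℚ R] [TopologicalSpace R]
    [IsTopologicalRing R] [T2Space R] {n : ℕ} {N : Matrix (Fin n) (Fin n) R}
    (hN : N.IsStrictLowerTriangular) {i j : Fin n} (hij : i ≤ j) :
    NormedSpace.exp N i j = (1 : Matrix (Fin n) (Fin n) R) i j := by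
  rw [NormedSpace.exp_eq_sum_range_of_pow_eq_zero (pow_eq_zero_of_le n.le_succ hN.pow_eq_zero),
    Finset.sum_range_succ', add_apply, sum_apply, Finset.sum_eq_zero fun k _ => ?_]
  · simp
  · rw [smul_apply, hN.pow_apply_eq_zero _ i j (by rw [Fin.le_def] at hij; omega), smul_zero]

theorem exp_smul_one {n : ℕ} (s : ℝ) :
    NormedSpace.exp (s • (1 : Matrix (Fin n) (Fin n) ℝ)) = Real.exp s • 1 := by
  rw [smul_one_eq_diagonal, exp_diagonal, Pi.exp_def, Real.exp_eq_exp_ℝ, ← smul_one_eq_diagonal]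

end Matrix

theorem Commute.smul_add_smul {R 𝔸 : Type*} [CommSemiring R] [Semiring 𝔸] [Algebra R 𝔸]
    {a b : 𝔸} (h : Commute a b) (r s r' s' : R) : Commute (r • a + s • b) (r' • a + s' • b) := by
  refine .add_left (.add_right ?_ ?_) (.add_right ?_ ?_) <;>
    apply_rules [Commute.smul_left, Commute.smul_right, Commute.refl, Commute.symm]

section hEl

variable {A X : Matrix (Fin 3) (Fin 3) ℝ}

theorem hEl_add (hAX : Commute A X) (p q : ℝ × ℝ) :
    hEl A X (p + q) = hEl A X p * hEl A X q := by
  rw [hEl, hEl, hEl, ← Matrix.exp_add_of_commute _ _ (hAX.smul_add_smul ..)]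
  congr 1
  simp only [Prod.fst_add, Prod.snd_add, add_smul]
  abel

theorem hEl_zero : hEl A X 0 = 1 := by simp [hEl]

theorem continuous_hEl : Continuous (hEl A X) := by
  let _ : NormedRing (Matrix (Fin 3) (Fin 3) ℝ) := Matrix.linftyOpNormedRing
  let _ : NormedAlgebra ℝ (Matrix (Fin 3) (Fin 3) ℝ) := Matrix.linftyOpNormedAlgebra
  let _ : NormedAlgebra ℚ (Matrix (Fin 3) (Fin 3) ℝ) := NormedAlgebra.restrictScalars ℚ ℝ _
  exact NormedSpace.exp_continuous.comp (by fun_prop)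

theorem commute_hEl (hAX : Commute A X) (p : ℝ × ℝ) : Commute X (hEl A X p) := by
  simpa [hEl] using (hAX.smul_add_smul 0 1 p.1 p.2).exp_right

theorem hEl_apply_of_le (hA : A.IsLowerTriangular) (hAdiag : ∀ i, A i i = 1)
    (hX : X.IsStrictLowerTriangular) (p : ℝ × ℝ) {i j : Fin 3} (hij : i ≤ j) :
    hEl A X p i j = Real.exp p.1 * (1 : Matrix (Fin 3) (Fin 3) ℝ) i j := by
  set N := p.1 • (A - 1) + p.2 • X
  have hN : N.IsStrictLowerTriangular := fun i j hij => by
    rcases hij.lt_or_eq with h | rfl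
    · simp [N, hA (show OrderDual.toDual j < OrderDual.toDual i from h), hX i j hij,
        one_apply_ne h.ne]
    · simp [N, hAdiag, hX i i le_rfl]
  have hsplit : p.1 • A + p.2 • X = p.1 • (1 : Matrix (Fin 3) (Fin 3) ℝ) + N := by
    simp only [N, smul_sub]
    abel
  rw [hEl, hsplit, Matrix.exp_add_of_commute _ _ ((Commute.one_left N).smul_left _),
    exp_smul_one, smul_mul_assoc, one_mul, Matrix.smul_apply, hN.exp_apply_of_le hij,
    smul_eq_mul]

theorem mulVec_hEl_mulVec_apply (hAX : Commute A X) (hA : A.IsLowerTriangular)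
    (hAdiag : ∀ i, A i i = 1) (hX : X.IsStrictLowerTriangular) (p : ℝ × ℝ) {v : Fin 3 → ℝ}
    {i : Fin 3} (hv : ∀ j < i, (X *ᵥ v) j = 0) :
    (X *ᵥ (hEl A X p *ᵥ v)) i = Real.exp p.1 * (X *ᵥ v) i := by
  rw [mulVec_mulVec, (commute_hEl hAX p).eq, ← mulVec_mulVec, mulVec, dotProduct,
    Finset.sum_eq_single i]
  · rw [hEl_apply_of_le hA hAdiag hX p le_rfl, one_apply_eq, mul_one]
  · intro j _ hji
    rcases hji.lt_or_gt with h | h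
    · rw [hv j h, mul_zero]
    · rw [hEl_apply_of_le hA hAdiag hX p h.le, one_apply_ne h.ne, mul_zero, zero_mul]
  · simp

theorem hEl_zero_fst_mulVec_apply (hX : X.IsStrictLowerTriangular) (t : ℝ) {v : Fin 3 → ℝ}
    {i : Fin 3} (hv : ∀ j < i, (X *ᵥ v) j = 0) :
    (hEl A X (0, t) *ᵥ v) i = v i + t * (X *ᵥ v) i := by
  have hexp : hEl A X (0, t) = 1 + t • X + (2⁻¹ : ℚ) • (t • X) ^ 2 := by
    rw [hEl, zero_smul, zero_add, NormedSpace.exp_eq_sum_range_of_pow_eq_zero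
      (by rw [smul_pow, hX.pow_eq_zero, smul_zero])]
    simp [Finset.sum_range_succ]
  have hX2 : (X *ᵥ (X *ᵥ v)) i = 0 := hX.mulVec_apply_eq_zero hv
  simp only [hexp, add_mulVec, smul_mulVec, mulVec_smul, pow_two, ← mulVec_mulVec, one_mulVec,
    Pi.add_apply, Pi.smul_apply, hX2, smul_eq_mul, mul_zero, smul_zero, add_zero]

abbrev hElAddAction (hAX : Commute A X) : AddAction (ℝ × ℝ) (Fin 3 → ℝ) where
  vadd p v := hEl A X p *ᵥ v
  zero_vadd v := show hEl A X 0 *ᵥ v = v by rw [hEl_zero, one_mulVec]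
  add_vadd p q v := show hEl A X (p + q) *ᵥ v = hEl A X p *ᵥ (hEl A X q *ᵥ v) by
    rw [hEl_add hAX, mulVec_mulVec]

end hEl

section Slice

variable {G α : Type*} [AddGroup G] [TopologicalSpace G] [ContinuousNeg G] [TopologicalSpace α]
  [AddAction G α] [ContinuousVAdd G α]

theorem exists_homeomorph_prod_of_vadd_equivariant {U S : Set α}
    (hU : ∀ g : G, ∀ u ∈ U, g +ᵥ u ∈ U) (σ : α → G) (hσ : ContinuousOn σ U)
    (hσ_vadd : ∀ g, ∀ u ∈ U, σ (g +ᵥ u) = g + σ u) (hS : ∀ u, u ∈ S ↔ u ∈ U ∧ σ u = 0) :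
    ∃ e : G × S ≃ₜ U, ∀ g c, (e (g, c) : α) = g +ᵥ (c : α) := by
  have hσ_val : Continuous fun w : U => σ w :=
    hσ.comp_continuous continuous_subtype_val Subtype.prop
  refine ⟨
    { toFun := fun x => ⟨x.1 +ᵥ (x.2 : α), hU _ _ ((hS _).1 x.2.2).1⟩
      invFun := fun w => (σ w, ⟨-σ w +ᵥ (w : α),
        (hS _).2 ⟨hU _ _ w.2, by rw [hσ_vadd _ _ w.2, neg_add_cancel]⟩⟩)
      left_inv := ?_
      right_inv := fun w => Subtype.ext (vadd_neg_vadd _ _)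
      continuous_toFun :=
        (continuous_fst.vadd (continuous_subtype_val.comp continuous_snd)).subtype_mk _
      continuous_invFun := hσ_val.prodMk ((hσ_val.neg.vadd continuous_subtype_val).subtype_mk _) },
    fun _ _ => rfl⟩
  rintro ⟨g, c, hc⟩
  obtain ⟨hcU, hσc⟩ := (hS c).1 hc
  have hσ_gc : σ (g +ᵥ c) = g := by rw [hσ_vadd g c hcU, hσc, add_zero]
  exact Prod.ext hσ_gc (Subtype.ext (by simp only [hσ_gc, neg_vadd_vadd]))

end Slice

section ScaleShift

variable {α : Type*} [AddAction (ℝ × ℝ) α]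

/-- The candidate for `p` with `u = p +ᵥ c`, `f c = 0`, `|ℓ c| = 1`, when `(s, 0)` scales `ℓ`
by `e^s` and `(0, t)` shifts `f` by `t ℓ`. -/
def orbitCoord (ℓ f : α → ℝ) (u : α) : ℝ × ℝ :=
  let u₀ := ((-Real.log |ℓ u|, 0) : ℝ × ℝ) +ᵥ u
  (Real.log |ℓ u|, f u₀ / ℓ u₀)

variable {U : Set α} {ℓ f : α → ℝ}

theorem orbitCoord_vadd (hU : ∀ p : ℝ × ℝ, ∀ u ∈ U, p +ᵥ u ∈ U) (hℓ0 : ∀ u ∈ U, ℓ u ≠ 0)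
    (hℓ : ∀ p : ℝ × ℝ, ∀ u ∈ U, ℓ (p +ᵥ u) = Real.exp p.1 * ℓ u)
    (hf : ∀ t : ℝ, ∀ u ∈ U, f (((0, t) : ℝ × ℝ) +ᵥ u) = f u + t * ℓ u) (p : ℝ × ℝ) {u : α}
    (hu : u ∈ U) : orbitCoord ℓ f (p +ᵥ u) = p + orbitCoord ℓ f u := by
  set s := Real.log |ℓ u|
  have hlog : Real.log |ℓ (p +ᵥ u)| = p.1 + s := by
    rw [hℓ p u hu, abs_mul, Real.abs_exp, Real.log_mul (Real.exp_ne_zero _)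
      (abs_ne_zero.2 (hℓ0 u hu)), Real.log_exp]
  set u₀ := ((-s, 0) : ℝ × ℝ) +ᵥ u
  have hu₀ : u₀ ∈ U := hU _ u hu
  have hshift : ((-(p.1 + s), 0) : ℝ × ℝ) +ᵥ (p +ᵥ u) = ((0, p.2) : ℝ × ℝ) +ᵥ u₀ := by
    simp only [u₀, vadd_vadd]
    congr 1
    ext <;> simp only [Prod.fst_add, Prod.snd_add] <;> ring
  rw [orbitCoord, orbitCoord, hlog, hshift, hf _ _ hu₀, hℓ _ _ hu₀, Real.exp_zero, one_mul,
    add_div, mul_div_cancel_right₀ _ (hℓ0 u₀ hu₀)]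
  exact Prod.ext rfl (add_comm _ _)

theorem continuousOn_orbitCoord [TopologicalSpace α] [ContinuousVAdd (ℝ × ℝ) α]
    (hU : ∀ p : ℝ × ℝ, ∀ u ∈ U, p +ᵥ u ∈ U) (hℓ0 : ∀ u ∈ U, ℓ u ≠ 0) (hℓc : Continuous ℓ)
    (hfc : Continuous f) : ContinuousOn (orbitCoord ℓ f) U := by
  have hlog : ContinuousOn (fun u => Real.log |ℓ u|) U :=
    hℓc.abs.continuousOn.log fun u hu => abs_ne_zero.2 (hℓ0 u hu)
  have hu₀ : ContinuousOn (fun u => ((-Real.log |ℓ u|, 0) : ℝ × ℝ) +ᵥ u) U :=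
    (hlog.neg.prodMk continuousOn_const).vadd continuousOn_id
  exact hlog.prodMk ((hfc.comp_continuousOn hu₀).div (hℓc.comp_continuousOn hu₀)
    fun u hu => hℓ0 _ (hU _ u hu))

theorem orbitCoord_eq_zero_iff (hℓ0 : ∀ u ∈ U, ℓ u ≠ 0) {u : α} (hu : u ∈ U) :
    orbitCoord ℓ f u = 0 ↔ f u = 0 ∧ |ℓ u| = 1 := by
  have hlog : Real.log |ℓ u| = 0 ↔ |ℓ u| = 1 := by
    rw [Real.log_eq_zero]
    have := abs_pos.2 (hℓ0 u hu)
    constructor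
    · rintro (h | h | h) <;> [linarith; exact h; linarith]
    · exact fun h => Or.inr (Or.inl h)
  rw [orbitCoord, Prod.ext_iff, Prod.fst_zero, Prod.snd_zero]
  dsimp only
  rw [hlog]
  constructor
  · rintro ⟨h1, h2⟩
    simp only [h1, Real.log_one, neg_zero, Prod.mk_zero_zero, zero_vadd, div_eq_zero_iff,
      hℓ0 u hu, or_false] at h2
    exact ⟨h2, h1⟩
  · rintro ⟨h2, h1⟩
    simp [h1, h2, Prod.mk_zero_zero]

theorem exists_homeomorph_prod_of_scale_shift [TopologicalSpace α] [ContinuousVAdd (ℝ × ℝ) α]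
    (hU : ∀ p : ℝ × ℝ, ∀ u ∈ U, p +ᵥ u ∈ U) (hℓ0 : ∀ u ∈ U, ℓ u ≠ 0)
    (hℓ : ∀ p : ℝ × ℝ, ∀ u ∈ U, ℓ (p +ᵥ u) = Real.exp p.1 * ℓ u)
    (hf : ∀ t : ℝ, ∀ u ∈ U, f (((0, t) : ℝ × ℝ) +ᵥ u) = f u + t * ℓ u) (hℓc : Continuous ℓ)
    (hfc : Continuous f) :
    ∃ e : (ℝ × ℝ) × {u | u ∈ U ∧ f u = 0 ∧ |ℓ u| = 1} ≃ₜ U,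
      ∀ p c, (e (p, c) : α) = p +ᵥ (c : α) :=
  exists_homeomorph_prod_of_vadd_equivariant hU (orbitCoord ℓ f)
    (continuousOn_orbitCoord hU hℓ0 hℓc hfc) (fun p _ hu => orbitCoord_vadd hU hℓ0 hℓ hf p hu)
    fun _ => ⟨fun ⟨hu, h⟩ => ⟨hu, (orbitCoord_eq_zero_iff hℓ0 hu).2 h⟩,
      fun ⟨hu, h⟩ => ⟨hu, (orbitCoord_eq_zero_iff hℓ0 hu).1 h⟩⟩

end ScaleShift

/-- For commuting lower triangular `A, X` with `diag(A) = (1,1,1)` and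
`X` strictly lower triangular, the layers `Ω₂, Ω₃` are invariant under
`H = {exp(sA+tX)}`, and whenever `Ω_b` is nonempty, `Σ_b` is a topological section for
the `H`-action on `Ω_b` (`b = 2, 3`). -/
theorem layers_invariant_and_sections
    (A X : Matrix (Fin 3) (Fin 3) ℝ) (hcomm : A * X = X * A)
    (hAlow : ∀ i j : Fin 3, i < j → A i j = 0) (hAdiag : ∀ i : Fin 3, A i i = 1)
    (hXlow : ∀ i j : Fin 3, i ≤ j → X i j = 0) :
    (∀ p : ℝ × ℝ, ∀ v ∈ Om2 X, hEl A X p *ᵥ v ∈ Om2 X) ∧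
    (∀ p : ℝ × ℝ, ∀ v ∈ Om3 X, hEl A X p *ᵥ v ∈ Om3 X) ∧
    ((Om2 X).Nonempty →
      ∃ e : ((ℝ × ℝ) × ↥(Sig2 X)) ≃ₜ ↥(Om2 X),
        ∀ (p : ℝ × ℝ) (c : ↥(Sig2 X)),
          ((e (p, c) : ↥(Om2 X)) : Fin 3 → ℝ) = hEl A X p *ᵥ (c : Fin 3 → ℝ)) ∧
    ((Om3 X).Nonempty →
      ∃ e : ((ℝ × ℝ) × ↥(Sig3 X)) ≃ₜ ↥(Om3 X),
        ∀ (p : ℝ × ℝ) (c : ↥(Sig3 X)),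
          ((e (p, c) : ↥(Om3 X)) : Fin 3 → ℝ) = hEl A X p *ᵥ (c : Fin 3 → ℝ)) := by
  let _ := hElAddAction hcomm
  have : ContinuousVAdd (ℝ × ℝ) (Fin 3 → ℝ) :=
    ⟨(continuous_hEl.comp continuous_fst).matrix_mulVec continuous_snd⟩
  have hX : X.IsStrictLowerTriangular := hXlow
  have hXv₀ (v) : (X *ᵥ v) 0 = 0 := hX.mulVec_apply_eq_zero fun j hj => absurd hj j.not_lt_zero
  have below₁ (v) : ∀ j < (1 : Fin 3), (X *ᵥ v) j = 0 := fun j hj => by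
    obtain rfl : j = 0 := by omega
    exact hXv₀ v
  have below₂ (v) (h : (X *ᵥ v) 1 = 0) : ∀ j < (2 : Fin 3), (X *ᵥ v) j = 0 := fun j hj => by
    obtain rfl | rfl : j = 0 ∨ j = 1 := by omega
    exacts [hXv₀ v, h]
  have scale₁ (p v) : (X *ᵥ (hEl A X p *ᵥ v)) 1 = Real.exp p.1 * (X *ᵥ v) 1 :=
    mulVec_hEl_mulVec_apply hcomm hAlow hAdiag hX p (below₁ v)
  have scale₂ (p) : ∀ v ∈ Om3 X, (X *ᵥ (hEl A X p *ᵥ v)) 2 = Real.exp p.1 * (X *ᵥ v) 2 :=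
    fun v hv => mulVec_hEl_mulVec_apply hcomm hAlow hAdiag hX p (below₂ v hv.1)
  have inv₂ : ∀ p : ℝ × ℝ, ∀ v ∈ Om2 X, hEl A X p *ᵥ v ∈ Om2 X := fun p v hv =>
    show _ ≠ 0 by rw [scale₁]; exact mul_ne_zero (Real.exp_ne_zero _) hv
  have inv₃ : ∀ p : ℝ × ℝ, ∀ v ∈ Om3 X, hEl A X p *ᵥ v ∈ Om3 X := fun p v hv =>
    ⟨by rw [scale₁, hv.1, mul_zero], by rw [scale₂ p v hv]; exact mul_ne_zero (by positivity) hv.2⟩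
  refine ⟨inv₂, inv₃, fun _ => ?_, fun _ => ?_⟩
  · exact exists_homeomorph_prod_of_scale_shift (ℓ := fun v => (X *ᵥ v) 1) (f := fun v => v 1)
      inv₂ (fun _ h => h) (fun p v _ => scale₁ p v)
      (fun t v _ => hEl_zero_fst_mulVec_apply hX t (below₁ v)) (by fun_prop) (continuous_apply 1)
  · exact exists_homeomorph_prod_of_scale_shift (ℓ := fun v => (X *ᵥ v) 2) (f := fun v => v 2)
      inv₃ (fun _ h => h.2) scale₂
      (fun t v hv => hEl_zero_fst_mulVec_apply hX t (below₂ v hv.1)) (by fun_prop)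
      (continuous_apply 2)
end
end
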